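/- Let ζ ∈ C²(ℝ^d) with bounded second derivatives, and v bounded measurable. Then the first-order commutator expansion holds: [ζ, G_{h/2}∗]v(x) = −(h/2) ∇G_{h/2}∗(∇ζ v)(x) + R(x), where the remainder satisfies |R(x)| ≤ C ‖∇²ζ‖_∞ h (k_h∗|v|)(x), with k_h the kernel of mass scale h given by the mask k(z)=|z|²G_{1/2}(z), and C depending only on d. -/

import Mathlib

/-! Since `-h ∇G_h(z) = z G_h(z)`, the commutator minus the first-order term is
`∫ G_{h/2}(z) (ζ(x) - ζ(x-z) - z·∇ζ(x-z)) v(x-z) dz`. The Taylor remainder in the bracket is at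
most `‖∇²ζ‖_∞ |z|²`, and `G_{h/2}(z) |z|² = h k_h(z)`, so the bound holds with `C = 1`.
Integrability comes from the finiteness of the Gaussian moments `∫ |z|ⁿ e^{-b|z|²} dz`. -/

open Real MeasureTheory
open scoped RealInnerProductSpace

/-- The centered Gaussian kernel of variance `h` on `ℝ^d`. -/
noncomputable def gauss (d : ℕ) (h : ℝ) (z : EuclideanSpace ℝ (Fin d)) : ℝ :=
  (2 * π * h) ^ (-(d : ℝ) / 2) * Real.exp (-‖z‖ ^ 2 / (2 * h))

/-- Convolution of two functions on `ℝ^d`. -/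
noncomputable def conv (d : ℕ) (f g : EuclideanSpace ℝ (Fin d) → ℝ)
    (x : EuclideanSpace ℝ (Fin d)) : ℝ :=
  ∫ z, f z * g (x - z)

/-- The commutator `[ζ, G_h∗]v = ζ·(G_h∗v) − G_h∗(ζv)`. -/
noncomputable def commG (d : ℕ) (h : ℝ) (ζ v : EuclideanSpace ℝ (Fin d) → ℝ)
    (x : EuclideanSpace ℝ (Fin d)) : ℝ :=
  ζ x * conv d (gauss d h) v x - conv d (gauss d h) (fun y => ζ y * v y) x

/-- The gradient `∇G_h(z) = -(G_h(z)/h) z` of the Gaussian kernel. -/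
noncomputable def gradGauss (d : ℕ) (h : ℝ) (z : EuclideanSpace ℝ (Fin d)) :
    EuclideanSpace ℝ (Fin d) :=
  (-(gauss d h z) / h) • z

/-- The rescaled kernel `k_h(z) = h^{-d/2} k(z/√h)` with mask `k(z) = |z|² π^{-d/2} e^{-|z|²}`,
i.e. `k_h(z) = h^{-d/2} (|z|²/h) π^{-d/2} e^{-|z|²/h}`. -/
noncomputable def kker (d : ℕ) (h : ℝ) (z : EuclideanSpace ℝ (Fin d)) : ℝ :=
  h ^ (-(d : ℝ) / 2) * ((‖z‖ ^ 2 / h) * π ^ (-(d : ℝ) / 2) * Real.exp (-(‖z‖ ^ 2 / h)))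

section GaussianMoments

variable {E : Type*} [NormedAddCommGroup E] [NormedSpace ℝ E] [FiniteDimensional ℝ E]
  [MeasurableSpace E] [BorelSpace E] (μ : Measure E) [μ.IsAddHaarMeasure]

theorem integrable_pow_norm_mul_exp_neg_mul_sq_norm (n : ℕ) {b : ℝ} (hb : 0 < b) :
    Integrable (fun z : E => ‖z‖ ^ n * exp (-b * ‖z‖ ^ 2)) μ := by
  rcases subsingleton_or_nontrivial E with hE | hE
  · convert integrable_const ((0 : ℝ) ^ n * exp (-b * 0 ^ 2)) (μ := μ) using 2 with z
    rw [Subsingleton.elim z 0, norm_zero]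
  · -- polar coordinates reduce this to the one-dimensional moment `∫₀^∞ r^(dim-1+n) e^(-br²) dr`
    rw [integrable_fun_norm_addHaar μ (f := fun r => r ^ n * exp (-b * r ^ 2))]
    have hmoment := integrableOn_rpow_mul_exp_neg_mul_sq hb
      (s := (Module.finrank ℝ E - 1 + n : ℕ)) (neg_one_lt_zero.trans_le (Nat.cast_nonneg _))
    refine hmoment.congr_fun (fun r _ => ?_) measurableSet_Ioi
    simp only [rpow_natCast, pow_add, smul_eq_mul]
    ring

variable {μ}

theorem integrable_of_norm_le_quadratic_mul_exp_neg_mul_sq_norm {f : E → ℝ}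
    (hf : AEStronglyMeasurable f μ) {b A B C : ℝ} (hb : 0 < b)
    (hle : ∀ z, ‖f z‖ ≤ (A + B * ‖z‖ + C * ‖z‖ ^ 2) * exp (-b * ‖z‖ ^ 2)) :
    Integrable f μ := by
  have moment (n : ℕ) := integrable_pow_norm_mul_exp_neg_mul_sq_norm μ n hb
  refine Integrable.mono' ((((moment 0).const_mul A).add ((moment 1).const_mul B)).add
    ((moment 2).const_mul C)) hf (ae_of_all _ fun z => (hle z).trans_eq ?_)
  simp only [Pi.add_apply]
  ring

end GaussianMoments

section Taylor

variable {E : Type*} [NormedAddCommGroup E] [InnerProductSpace ℝ E] [CompleteSpace E]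
  {ζ : E → ℝ} {M : ℝ}

theorem ContDiff.contDiff_gradient {n : WithTop ℕ∞} (hζ : ContDiff ℝ (n + 1) ζ) :
    ContDiff ℝ n (gradient ζ) :=
  (InnerProductSpace.toDual ℝ E).symm.contDiff.comp (hζ.fderiv_right le_rfl)

theorem norm_gradient_sub_le (hζ : Differentiable ℝ (gradient ζ))
    (hM : ∀ x, ‖fderiv ℝ (gradient ζ) x‖ ≤ M) (x y : E) :
    ‖gradient ζ x - gradient ζ y‖ ≤ M * ‖x - y‖ :=
  convex_univ.norm_image_sub_le_of_norm_fderiv_le (fun w _ => hζ w) (fun w _ => hM w)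
    (Set.mem_univ y) (Set.mem_univ x)

theorem abs_sub_sub_inner_gradient_le (hζ : Differentiable ℝ ζ)
    (hζ' : Differentiable ℝ (gradient ζ)) (hM : ∀ x, ‖fderiv ℝ (gradient ζ) x‖ ≤ M) (x y : E) :
    |ζ x - ζ y - ⟪x - y, gradient ζ y⟫| ≤ M * ‖x - y‖ ^ 2 := by
  have hM₀ : 0 ≤ M := (norm_nonneg _).trans (hM x)
  have hbound : ∀ w ∈ Metric.closedBall y ‖x - y‖,
      ‖fderiv ℝ ζ w - fderiv ℝ ζ y‖ ≤ M * ‖x - y‖ := by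
    intro w hw
    rw [← toDual_gradient, ← toDual_gradient, ← map_sub, LinearIsometryEquiv.norm_map]
    calc ‖gradient ζ w - gradient ζ y‖ ≤ M * ‖w - y‖ := norm_gradient_sub_le hζ' hM w y
      _ ≤ M * ‖x - y‖ := by
        gcongr
        rwa [Metric.mem_closedBall, dist_eq_norm] at hw
  have hx : x ∈ Metric.closedBall y ‖x - y‖ := by
    rw [Metric.mem_closedBall, dist_eq_norm]
  have := (convex_closedBall y ‖x - y‖).norm_image_sub_le_of_norm_fderiv_le'
    (fun w _ => hζ w) hbound (Metric.mem_closedBall_self (norm_nonneg _)) hx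
  rwa [← inner_gradient_left, real_inner_comm, Real.norm_eq_abs, mul_assoc, ← sq] at this

theorem abs_inner_gradient_le (hζ : Differentiable ℝ (gradient ζ))
    (hM : ∀ x, ‖fderiv ℝ (gradient ζ) x‖ ≤ M) (x y : E) :
    |⟪x - y, gradient ζ y⟫| ≤ ‖gradient ζ x‖ * ‖x - y‖ + M * ‖x - y‖ ^ 2 := by
  have hlip := norm_gradient_sub_le hζ hM y x
  rw [norm_sub_rev y x] at hlip
  calc |⟪x - y, gradient ζ y⟫| ≤ ‖x - y‖ * ‖gradient ζ y‖ := abs_real_inner_le_norm _ _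
    _ ≤ ‖x - y‖ * (‖gradient ζ x‖ + M * ‖x - y‖) := by
      gcongr
      linarith [norm_le_insert' (gradient ζ y) (gradient ζ x)]
    _ = ‖gradient ζ x‖ * ‖x - y‖ + M * ‖x - y‖ ^ 2 := by ring

end Taylor

section GaussianKernel

variable {d : ℕ} {h : ℝ}

local notation "E" => EuclideanSpace ℝ (Fin d)

theorem gauss_eq (z : E) :
    gauss d h z = (2 * π * h) ^ (-(d : ℝ) / 2) * exp (-(2 * h)⁻¹ * ‖z‖ ^ 2) := by
  rw [gauss]
  congr 2
  ring

theorem continuous_gauss : Continuous (gauss d h) := by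
  simp only [funext gauss_eq]
  fun_prop

theorem gauss_nonneg (hh : 0 ≤ h) (z : E) : 0 ≤ gauss d h z := by
  unfold gauss
  positivity

theorem neg_mul_inner_gradGauss (hh : h ≠ 0) (z w : E) :
    -h * ⟪gradGauss d h z, w⟫ = gauss d h z * ⟪z, w⟫ := by
  rw [gradGauss, real_inner_smul_left]
  field_simp

theorem gauss_half_mul_sq_norm (hh : 0 < h) (z : E) :
    gauss d (h / 2) z * ‖z‖ ^ 2 = h * kker d h z := by
  rw [gauss_eq, kker, show 2 * π * (h / 2) = π * h by ring, mul_rpow pi_pos.le hh.le,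
    show -(2 * (h / 2))⁻¹ * ‖z‖ ^ 2 = -(‖z‖ ^ 2 / h) by ring]
  field_simp

theorem integrable_gauss_mul (hh : 0 < h) {f : E → ℝ} (hf : AEStronglyMeasurable f)
    {A B C : ℝ} (hle : ∀ z, |f z| ≤ A + B * ‖z‖ + C * ‖z‖ ^ 2) :
    Integrable (fun z => gauss d h z * f z) := by
  set c := (2 * π * h) ^ (-(d : ℝ) / 2)
  have hc : 0 ≤ c := by positivity
  refine integrable_of_norm_le_quadratic_mul_exp_neg_mul_sq_norm
    (continuous_gauss.aestronglyMeasurable.mul hf) (A := c * A) (B := c * B) (C := c * C)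
    (inv_pos.2 (mul_pos two_pos hh)) fun z => ?_
  rw [norm_mul, Real.norm_eq_abs, Real.norm_eq_abs, abs_of_nonneg (gauss_nonneg hh.le z),
    gauss_eq]
  calc c * exp (-(2 * h)⁻¹ * ‖z‖ ^ 2) * |f z|
      ≤ c * exp (-(2 * h)⁻¹ * ‖z‖ ^ 2) * (A + B * ‖z‖ + C * ‖z‖ ^ 2) := by
        gcongr
        exact hle z
    _ = (c * A + c * B * ‖z‖ + c * C * ‖z‖ ^ 2) * exp (-(2 * h)⁻¹ * ‖z‖ ^ 2) := by ring

theorem integrable_kker_mul (hh : 0 < h) {f : E → ℝ} (hf : AEStronglyMeasurable f) {C : ℝ}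
    (hle : ∀ z, |f z| ≤ C) : Integrable (fun z => kker d h z * f z) := by
  have hint := (integrable_gauss_mul (half_pos hh) (f := fun z => ‖z‖ ^ 2 * f z)
    ((continuous_norm.pow 2).aestronglyMeasurable.mul hf) (A := 0) (B := 0) (C := C)
    fun z => by rw [abs_mul, abs_of_nonneg (by positivity)]; nlinarith [hle z, sq_nonneg ‖z‖])
    |>.const_mul h⁻¹
  refine hint.congr (ae_of_all _ fun z => ?_)
  calc h⁻¹ * (gauss d (h / 2) z * (‖z‖ ^ 2 * f z))
      = h⁻¹ * (gauss d (h / 2) z * ‖z‖ ^ 2) * f z := by ring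
    _ = kker d h z * f z := by
      rw [gauss_half_mul_sq_norm hh]
      field_simp

theorem commG_sub_eq_integral_taylor_remainder (hh : h ≠ 0) (ζ v : E → ℝ) (x : E)
    (hv : Integrable fun z => gauss d h z * v (x - z))
    (hgrad : Integrable fun z => gauss d h z * (⟪z, gradient ζ (x - z)⟫ * v (x - z)))
    (hrem : Integrable fun z =>
      gauss d h z * ((ζ x - ζ (x - z) - ⟪z, gradient ζ (x - z)⟫) * v (x - z))) :
    commG d h ζ v x - (-h) * ∫ z, ⟪gradGauss d h z, gradient ζ (x - z)⟫ * v (x - z)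
      = ∫ z, gauss d h z * ((ζ x - ζ (x - z) - ⟪z, gradient ζ (x - z)⟫) * v (x - z)) := by
  have hgradGauss : (-h) * ∫ z, ⟪gradGauss d h z, gradient ζ (x - z)⟫ * v (x - z)
      = ∫ z, gauss d h z * (⟪z, gradient ζ (x - z)⟫ * v (x - z)) := by
    rw [← integral_const_mul]
    congr 1 with z
    rw [← mul_assoc, neg_mul_inner_gradGauss hh, mul_assoc]
  have hζv : ∫ z, gauss d h z * (ζ (x - z) * v (x - z))
      = ∫ z, (ζ x * (gauss d h z * v (x - z))
        - gauss d h z * (⟪z, gradient ζ (x - z)⟫ * v (x - z))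
        - gauss d h z * ((ζ x - ζ (x - z) - ⟪z, gradient ζ (x - z)⟫) * v (x - z))) := by
    congr 1 with z
    ring
  have hsub := integral_sub ((hv.const_mul (ζ x)).sub hgrad) hrem
  simp only [Pi.sub_apply] at hsub
  simp only [commG, conv]
  rw [hgradGauss, hζv, hsub, integral_sub (hv.const_mul _) hgrad, integral_const_mul]
  ring

theorem abs_integral_gauss_half_mul_le (hh : 0 < h) {r f : E → ℝ} {M : ℝ}
    (hr : ∀ z, |r z| ≤ M * ‖z‖ ^ 2) (hf : Integrable fun z => kker d h z * |f z|) :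
    |∫ z, gauss d (h / 2) z * (r z * f z)| ≤ M * h * ∫ z, kker d h z * |f z| := by
  rw [← integral_const_mul, ← Real.norm_eq_abs]
  refine norm_integral_le_of_norm_le (hf.const_mul _) (ae_of_all _ fun z => ?_)
  have hG := gauss_nonneg (d := d) (half_pos hh).le z
  calc ‖gauss d (h / 2) z * (r z * f z)‖ = gauss d (h / 2) z * |r z| * |f z| := by
        rw [Real.norm_eq_abs, abs_mul, abs_mul, abs_of_nonneg hG, mul_assoc]
    _ ≤ gauss d (h / 2) z * (M * ‖z‖ ^ 2) * |f z| := by gcongr; exact hr z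
    _ = M * h * (kker d h z * |f z|) := by
        linear_combination (M * |f z|) * gauss_half_mul_sq_norm hh z

end GaussianKernel

/-- First-order commutator expansion: for `ζ ∈ C²` with
`‖∇²ζ‖_∞ ≤ M₂` and bounded measurable `v`,
`[ζ, G_{h/2}∗]v(x) = −(h/2)∇G_{h/2}∗(∇ζ v)(x) + R(x)` with
`|R(x)| ≤ C M₂ h (k_h∗|v|)(x)`, `C = C(d)`. -/
theorem stmt9 (d : ℕ) :
    ∃ C : ℝ, 0 < C ∧ ∀ (h : ℝ), 0 < h →
      ∀ (ζ : EuclideanSpace ℝ (Fin d) → ℝ), ContDiff ℝ 2 ζ →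
      ∀ M₂ : ℝ, (∀ x, ‖fderiv ℝ (fun y => gradient ζ y) x‖ ≤ M₂) →
      ∀ (v : EuclideanSpace ℝ (Fin d) → ℝ), Measurable v →
      ∀ Cv : ℝ, (∀ x, |v x| ≤ Cv) →
      ∀ x, |commG d (h / 2) ζ v x
          - (-(h / 2)) * ∫ z, ⟪gradGauss d (h / 2) z, gradient ζ (x - z)⟫ * v (x - z)|
        ≤ C * M₂ * h * ∫ z, kker d h z * |v (x - z)| := by
  refine ⟨1, one_pos, fun h hh ζ hζ M₂ hM v hv Cv hCv x => ?_⟩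
  have hgrad : ContDiff ℝ 1 (gradient ζ) := hζ.contDiff_gradient
  have hgrad₁ := hgrad.differentiable one_ne_zero
  have hM₂ : 0 ≤ M₂ := (norm_nonneg _).trans (hM x)
  have hCv₀ : 0 ≤ Cv := (abs_nonneg _).trans (hCv x)
  have hvx : AEStronglyMeasurable fun z => v (x - z) :=
    (hv.comp (measurable_const.sub measurable_id)).aestronglyMeasurable
  have hinner_cont : Continuous fun z => ⟪z, gradient ζ (x - z)⟫ :=
    continuous_id.inner (hgrad.continuous.comp (by fun_prop))
  have hrem_cont : Continuous fun z => ζ x - ζ (x - z) - ⟪z, gradient ζ (x - z)⟫ :=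
    (continuous_const.sub (hζ.continuous.comp (by fun_prop))).sub hinner_cont
  have hrem (z : EuclideanSpace ℝ (Fin d)) :
      |ζ x - ζ (x - z) - ⟪z, gradient ζ (x - z)⟫| ≤ M₂ * ‖z‖ ^ 2 := by
    simpa using abs_sub_sub_inner_gradient_le (hζ.differentiable two_ne_zero) hgrad₁ hM x (x - z)
  have hinner (z : EuclideanSpace ℝ (Fin d)) :
      |⟪z, gradient ζ (x - z)⟫| ≤ ‖gradient ζ x‖ * ‖z‖ + M₂ * ‖z‖ ^ 2 := by
    simpa using abs_inner_gradient_le hgrad₁ hM x (x - z)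
  rw [commG_sub_eq_integral_taylor_remainder (half_pos hh).ne' ζ v x, one_mul]
  · exact abs_integral_gauss_half_mul_le hh hrem
      (integrable_kker_mul hh hvx.norm (C := Cv) fun z => by simpa using hCv (x - z))
  · exact integrable_gauss_mul (half_pos hh) hvx (A := Cv) (B := 0) (C := 0)
      fun z => by simpa using hCv (x - z)
  · exact integrable_gauss_mul (half_pos hh) (hinner_cont.aestronglyMeasurable.mul hvx)
      (A := 0) (B := Cv * ‖gradient ζ x‖) (C := Cv * M₂) fun z => (abs_mul _ _).trans_le <|
        (mul_le_mul (hinner z) (hCv _) (abs_nonneg _) (by positivity)).trans_eq (by ring)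
  · exact integrable_gauss_mul (half_pos hh) (hrem_cont.aestronglyMeasurable.mul hvx)
      (A := 0) (B := 0) (C := M₂ * Cv) fun z => (abs_mul _ _).trans_le <|
        (mul_le_mul (hrem z) (hCv _) (abs_nonneg _) (by positivity)).trans_eq (by ring)
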